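/- arXiv:1801.01327 — 2 statements merged into one kernel-verified Lean document; each statement's English description precedes it below -/
import Mathlib

section
/- Let A ∈ B(E,F) have generalized inverse A⁺ and T ∈ B(E,F) with ‖T − A‖ < ‖A⁺‖⁻¹. Then C_A(A⁺,T)⁻¹ T (N(A)) ⊆ R(A) if and only if (I_E − A⁺A)(N(T)) = N(A). -/
/-!
Since `A A⁺ A = A`, the operator `C = I + (T - A) A⁺` satisfies `C A = T A⁺ A`. Hence if
`x = z - A⁺ A z` with `T z = 0`, then `C⁻¹ T x = -A z ∈ R(A)`. Conversely, if `x ∈ N(A)` and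
`C⁻¹ T x = A u`, then `T x = T A⁺ A u`, so `z = x - A⁺ A u ∈ N(T)` and `(I - A⁺ A) z = x`.
The inclusion `(I - A⁺ A)(N(T)) ⊆ N(A)` holds for every `T`. The norm bound makes
`‖(T - A) A⁺‖ < 1`, so `C` is invertible by the Neumann series.
-/

open ContinuousLinearMap

theorem ContinuousLinearMap.isUnit_id_add_comp_of_norm_lt_inv {𝕜 E F : Type*}
    [NontriviallyNormedField 𝕜] [NormedAddCommGroup E] [NormedSpace 𝕜 E] [NormedAddCommGroup F]
    [NormedSpace 𝕜 F] [CompleteSpace F] {S : E →L[𝕜] F} {B : F →L[𝕜] E} (h : ‖S‖ < ‖B‖⁻¹) :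
    IsUnit (.id 𝕜 F + S ∘L B) := by
  have hB : 0 < ‖B‖ := inv_pos.1 ((norm_nonneg S).trans_lt h)
  have hSB : ‖-(S ∘L B)‖ < 1 := by
    rw [norm_neg]
    calc ‖S ∘L B‖ ≤ ‖S‖ * ‖B‖ := opNorm_comp_le S B
      _ < 1 := (lt_inv_mul_iff₀' hB).1 (by simpa using h)
  simpa [sub_neg_eq_add, one_def] using isUnit_one_sub_of_norm_lt_one hSB

namespace LinearMap

variable {R E F : Type*} [Ring R] [AddCommGroup E] [Module R E] [AddCommGroup F] [Module R F]
  {A T : E →ₗ[R] F} {Ap : F →ₗ[R] E}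

theorem map_id_sub_comp_ker_le_ker (hA : ∀ x, A (Ap (A x)) = A x) :
    (ker T).map (id - Ap ∘ₗ A) ≤ ker A := by
  rintro _ ⟨z, -, rfl⟩
  simp [hA]

theorem map_symm_comp_ker_le_range (C : F ≃ₗ[R] F) (hC : ∀ x, C (A x) = T (Ap (A x)))
    (h : ker A ≤ (ker T).map (id - Ap ∘ₗ A)) :
    (ker A).map (C.symm.toLinearMap ∘ₗ T) ≤ range A := by
  rintro _ ⟨x, hx, rfl⟩
  obtain ⟨z, hz, rfl⟩ := h hx
  refine ⟨-z, ?_⟩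
  rw [SetLike.mem_coe, mem_ker] at hz
  simp [hz, ← hC]

theorem ker_le_map_id_sub_comp_ker (C : F ≃ₗ[R] F) (hA : ∀ x, A (Ap (A x)) = A x)
    (hC : ∀ x, C (A x) = T (Ap (A x)))
    (h : (ker A).map (C.symm.toLinearMap ∘ₗ T) ≤ range A) :
    ker A ≤ (ker T).map (id - Ap ∘ₗ A) := by
  intro x hx
  obtain ⟨u, hu⟩ := h ⟨x, hx, rfl⟩
  have hTx : T x = T (Ap (A u)) := by
    rw [← hC, hu]
    simp
  refine ⟨x - Ap (A u), ?_, ?_⟩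
  · simp [hTx]
  · rw [mem_ker] at hx
    simp [hx, hA]

theorem map_symm_comp_ker_le_range_iff (C : F ≃ₗ[R] F) (hA : ∀ x, A (Ap (A x)) = A x)
    (hC : ∀ x, C (A x) = T (Ap (A x))) :
    (ker A).map (C.symm.toLinearMap ∘ₗ T) ≤ range A ↔ (ker T).map (id - Ap ∘ₗ A) = ker A :=
  ⟨fun h ↦ (map_id_sub_comp_ker_le_ker hA).antisymm (ker_le_map_id_sub_comp_ker C hA hC h),
    fun h ↦ map_symm_comp_ker_le_range C hC h.ge⟩

end LinearMap

variable {E F : Type*} [NormedAddCommGroup E] [NormedSpace ℝ E] [CompleteSpace E]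
  [NormedAddCommGroup F] [NormedSpace ℝ F] [CompleteSpace F]

theorem stmt6_general (A T : E →L[ℝ] F) (Ap : F →L[ℝ] E)
    (h1 : A ∘L (Ap ∘L A) = A)
    (hT : ‖T - A‖ < ‖Ap‖⁻¹) :
    Submodule.map ((Ring.inverse (ContinuousLinearMap.id ℝ F + (T - A) ∘L Ap) ∘L T : E →L[ℝ] F) : E →ₗ[ℝ] F)
        (LinearMap.ker (A : E →ₗ[ℝ] F)) ≤ LinearMap.range (A : E →ₗ[ℝ] F) ↔
      Submodule.map ((ContinuousLinearMap.id ℝ E - Ap ∘L A : E →L[ℝ] E) : E →ₗ[ℝ] E) (LinearMap.ker (T : E →ₗ[ℝ] F)) =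
        LinearMap.ker (A : E →ₗ[ℝ] F) := by
  obtain ⟨C, hC⟩ := isUnit_id_add_comp_of_norm_lt_inv hT
  have hA : ∀ x, A (Ap (A x)) = A x := DFunLike.congr_fun h1
  have hCA : ∀ x, (C : F →L[ℝ] F) (A x) = T (Ap (A x)) := fun x ↦ by simp [hC, hA]
  rw [← hC, Ring.inverse_unit]
  exact LinearMap.map_symm_comp_ker_le_range_iff
    (ContinuousLinearEquiv.unitsEquiv ℝ F C).toLinearEquiv hA hCA

theorem stmt6 (A T : E →L[ℝ] F) (Ap : F →L[ℝ] E)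
    (h1 : A ∘L (Ap ∘L A) = A) (h2 : Ap ∘L (A ∘L Ap) = Ap)
    (hT : ‖T - A‖ < ‖Ap‖⁻¹) :
    Submodule.map ((Ring.inverse (ContinuousLinearMap.id ℝ F + (T - A) ∘L Ap) ∘L T : E →L[ℝ] F) : E →ₗ[ℝ] F)
        (LinearMap.ker (A : E →ₗ[ℝ] F)) ≤ LinearMap.range (A : E →ₗ[ℝ] F) ↔
      Submodule.map ((ContinuousLinearMap.id ℝ E - Ap ∘L A : E →L[ℝ] E) : E →ₗ[ℝ] E) (LinearMap.ker (T : E →ₗ[ℝ] F)) =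
        LinearMap.ker (A : E →ₗ[ℝ] F) :=
  stmt6_general A T Ap h1 hT
end

section
/- Let A ∈ B(E,F) have generalized inverse A⁺, and let W = { T ∈ B(E,F) : ‖T − A‖ < ‖A⁺‖⁻¹ }. Define D(X) = (X − A) P_{R(A⁺)} + C_A(A⁺,X)⁻¹ X for X ∈ W, where P_{R(A⁺)} is the projection of E onto R(A⁺) along N(A) and C_A(A⁺,X) = I_F + (X−A)A⁺. Then (D(X) − A) A⁺ = (X − A) A⁺ for all X ∈ W. -/
/-!
From `A⁺ A A⁺ = A⁺` one gets `C_A(A⁺, X) A A⁺ = X A⁺`, so `C_A(A⁺, X)⁻¹ X A⁺ = A A⁺`; and the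
projection onto `R(A⁺)` fixes `A⁺`. Hence `(D(X) - A) A⁺ = (X - A) A⁺ + A A⁺ - A A⁺`.
-/

open ContinuousLinearMap

variable {E F : Type*} [NormedAddCommGroup E] [NormedSpace ℝ E] [CompleteSpace E]
  [NormedAddCommGroup F] [NormedSpace ℝ F] [CompleteSpace F]

namespace ContinuousLinearMap

theorem comp_eq_right_of_range_le {R M N : Type*} [Semiring R]
    [TopologicalSpace M] [AddCommMonoid M] [Module R M]
    [TopologicalSpace N] [AddCommMonoid N] [Module R N]
    {P : M →L[R] M} (hP : IsIdempotentElem P) {T : N →L[R] M}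
    (h : LinearMap.range (T : N →ₗ[R] M) ≤ LinearMap.range (P : M →ₗ[R] M)) :
    P ∘L T = T := by
  ext y
  exact (LinearMap.IsIdempotentElem.mem_range_iff hP.toLinearMap).1 (h ⟨y, rfl⟩)

theorem ring_inverse_comp_cancel_left {R M N : Type*} [Semiring R]
    [TopologicalSpace M] [AddCommMonoid M] [Module R M]
    [TopologicalSpace N] [AddCommMonoid N] [Module R N]
    {C : N →L[R] N} (hC : IsUnit C) (Y : M →L[R] N) :
    Ring.inverse C ∘L (C ∘L Y) = Y := by
  rw [← comp_assoc, ← mul_def, Ring.inverse_mul_cancel C hC, one_def, id_comp]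

section Perturbation

variable {𝕜 M N : Type*} [NontriviallyNormedField 𝕜]
  [NormedAddCommGroup M] [NormedSpace 𝕜 M] [NormedAddCommGroup N] [NormedSpace 𝕜 N]

/-- The operator `C_A(A⁺, X)` of the paper. -/
def perturbationFactor (A X : M →L[𝕜] N) (Ap : N →L[𝕜] M) : N →L[𝕜] N :=
  ContinuousLinearMap.id 𝕜 N + (X - A) ∘L Ap

theorem isUnit_one_add_comp_of_norm_lt_inv [CompleteSpace N] {S : M →L[𝕜] N}
    {T : N →L[𝕜] M} (h : ‖S‖ < ‖T‖⁻¹) : IsUnit (1 + S ∘L T) := by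
  have hT : 0 < ‖T‖ := inv_pos.1 ((norm_nonneg S).trans_lt h)
  have hST : ‖-(S ∘L T)‖ < 1 := by
    rw [norm_neg]
    calc ‖S ∘L T‖ ≤ ‖S‖ * ‖T‖ := opNorm_comp_le S T
      _ < 1 := (lt_div_iff₀ hT).1 (by rwa [one_div])
  simpa only [sub_neg_eq_add] using isUnit_one_sub_of_norm_lt_one hST

theorem isUnit_perturbationFactor [CompleteSpace N] {A X : M →L[𝕜] N} {Ap : N →L[𝕜] M}
    (hX : ‖X - A‖ < ‖Ap‖⁻¹) : IsUnit (perturbationFactor A X Ap) := by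
  simpa only [perturbationFactor, one_def] using isUnit_one_add_comp_of_norm_lt_inv hX

theorem perturbationFactor_comp_comp {A X : M →L[𝕜] N} {Ap : N →L[𝕜] M}
    (hAp : Ap ∘L (A ∘L Ap) = Ap) :
    perturbationFactor A X Ap ∘L (A ∘L Ap) = X ∘L Ap := by
  rw [perturbationFactor, add_comp, id_comp, comp_assoc, hAp, sub_comp, add_sub_cancel]

theorem ring_inverse_perturbationFactor_comp_comp [CompleteSpace N] {A X : M →L[𝕜] N}
    {Ap : N →L[𝕜] M} (hAp : Ap ∘L (A ∘L Ap) = Ap) (hX : ‖X - A‖ < ‖Ap‖⁻¹) :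
    Ring.inverse (perturbationFactor A X Ap) ∘L (X ∘L Ap) = A ∘L Ap := by
  rw [← perturbationFactor_comp_comp hAp,
    ring_inverse_comp_cancel_left (isUnit_perturbationFactor hX)]

end Perturbation

end ContinuousLinearMap

theorem stmt17_general (A : E →L[ℝ] F) (Ap : F →L[ℝ] E)
    (h2 : Ap ∘L (A ∘L Ap) = Ap)
    (Pr : E →L[ℝ] E) (hPr : Pr ∘L Pr = Pr)
    (hPrr : LinearMap.range (Pr : E →ₗ[ℝ] E) = LinearMap.range (Ap : F →ₗ[ℝ] E)) :
    ∀ X : E →L[ℝ] F, ‖X - A‖ < ‖Ap‖⁻¹ →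
      (((X - A) ∘L Pr +
        Ring.inverse (ContinuousLinearMap.id ℝ F + (X - A) ∘L Ap) ∘L X) - A) ∘L Ap =
        (X - A) ∘L Ap := by
  intro X hX
  have hPAp : Pr ∘L Ap = Ap := comp_eq_right_of_range_le hPr hPrr.ge
  change ((X - A) ∘L Pr + Ring.inverse (perturbationFactor A X Ap) ∘L X - A) ∘L Ap = _
  rw [sub_comp, add_comp, comp_assoc, hPAp, comp_assoc,
    ring_inverse_perturbationFactor_comp_comp h2 hX, add_sub_cancel_right]

theorem stmt17 (A : E →L[ℝ] F) (Ap : F →L[ℝ] E)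
    (h1 : A ∘L (Ap ∘L A) = A) (h2 : Ap ∘L (A ∘L Ap) = Ap)
    (Pr : E →L[ℝ] E) (hPr : Pr ∘L Pr = Pr)
    (hPrr : LinearMap.range (Pr : E →ₗ[ℝ] E) = LinearMap.range (Ap : F →ₗ[ℝ] E))
    (hPrk : LinearMap.ker (Pr : E →ₗ[ℝ] E) = LinearMap.ker (A : E →ₗ[ℝ] F)) :
    ∀ X : E →L[ℝ] F, ‖X - A‖ < ‖Ap‖⁻¹ →
      (((X - A) ∘L Pr +
        Ring.inverse (ContinuousLinearMap.id ℝ F + (X - A) ∘L Ap) ∘L X) - A) ∘L Ap =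
        (X - A) ∘L Ap :=
  stmt17_general A Ap h2 Pr hPr hPrr
end
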